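/- For α > -1 and n ≥ 1, the polynomials L_n^α and L_{n-1}^{α+2} have no common zeros. -/

import Mathlib

/-!
Pascal's rule for the coefficients `C(n + α, n - k)` gives `L_{n+1}^{α+1} = L_{n+1}^α + L_n^{α+1}`,
and `(j + 1) C(r, j + 1) = (r - j) C(r, j)` gives `x L_n^{α+1} = (n + 1 + α) L_n^α - (n + 1) L_{n+1}^α`.
Combined, they yield `(α + 1) L_n^{α+1} = (α + n + 1) L_n^α + x L_{n-1}^{α+2}`, so a common zero of
`L_n^α` and `L_{n-1}^{α+2}` is also a zero of `L_n^{α+1}`. The same two relations show that a common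
zero of `L_n^α` and `L_n^{α+1}` is one of `L_{n-1}^α` and `L_{n-1}^{α+1}` (as `n + α ≠ 0`), and
descending to `L_0^α = 1` gives a contradiction.
-/

open Finset

/-- Generalized Laguerre polynomial `L_n^α(x) = ∑_{k=0}^n (-1)^k C(n+α, n-k) x^k / k!`,
where `C(n+α, n-k) = (∏_{i=1}^{n-k} (α+k+i)) / (n-k)!`. -/
noncomputable def laguerre (α : ℝ) (n : ℕ) (x : ℝ) : ℝ :=
  ∑ k ∈ Finset.range (n + 1),
    (-1 : ℝ) ^ k * (∏ i ∈ Finset.range (n - k), (α + k + 1 + i)) /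
      ((Nat.factorial (n - k) : ℝ) * (Nat.factorial k : ℝ)) * x ^ k

open scoped Nat

theorem ascPochhammer_eval_eq_prod_range {R : Type*} [CommSemiring R] (m : ℕ) (a : R) :
    (ascPochhammer R m).eval a = ∏ i ∈ range m, (a + i) := by
  induction m with
  | zero => simp
  | succ m ih => rw [ascPochhammer_succ_eval, ih, prod_range_succ]

namespace Ring

variable {K : Type*} [Field K] [CharZero K]

theorem multichoose_eq_prod_range_div (a : K) (m : ℕ) :
    multichoose a m = (∏ i ∈ range m, (a + i)) / m ! := by
  rw [eq_div_iff (Nat.cast_ne_zero.mpr m.factorial_ne_zero), ← ascPochhammer_eval_eq_prod_range,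
    ← Polynomial.ascPochhammer_smeval_eq_eval, ← factorial_nsmul_multichoose_eq_ascPochhammer,
    nsmul_eq_mul, mul_comm]

theorem succ_mul_multichoose_succ (a : K) (m : ℕ) :
    (m + 1) * multichoose a (m + 1) = (a + m) * multichoose a m := by
  rw [multichoose_eq_prod_range_div, multichoose_eq_prod_range_div, prod_range_succ,
    Nat.factorial_succ]
  push_cast
  field_simp

end Ring

open Ring

/-- `multichoose (α + k + 1) (n - k)` is the generalized binomial coefficient `C(n + α, n - k)`. -/
noncomputable def laguerreCoeff (α : ℝ) (n k : ℕ) : ℝ :=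
  (-1) ^ k * multichoose (α + k + 1) (n - k) / k !

theorem laguerre_eq_sum_laguerreCoeff (α : ℝ) (n : ℕ) (x : ℝ) :
    laguerre α n x = ∑ k ∈ range (n + 1), laguerreCoeff α n k * x ^ k := by
  refine sum_congr rfl fun k _ => ?_
  rw [laguerreCoeff, multichoose_eq_prod_range_div, div_mul_eq_div_div, mul_div_assoc]

theorem laguerreCoeff_self (α : ℝ) (n : ℕ) : laguerreCoeff α n n = (-1) ^ n / n ! := by
  rw [laguerreCoeff, Nat.sub_self, multichoose_zero_right, mul_one]

theorem laguerreCoeff_add_one_succ {α : ℝ} {n k : ℕ} (hk : k ≤ n) :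
    laguerreCoeff (α + 1) (n + 1) k = laguerreCoeff α (n + 1) k + laguerreCoeff (α + 1) n k := by
  obtain ⟨j, rfl⟩ := Nat.exists_eq_add_of_le hk
  rw [laguerreCoeff, laguerreCoeff, laguerreCoeff, show k + j + 1 - k = j + 1 by omega,
    show k + j - k = j by omega, show α + 1 + k + 1 = α + k + 1 + 1 by ring, multichoose_succ_succ]
  ring

theorem laguerre_add_one_succ (α : ℝ) (n : ℕ) (x : ℝ) :
    laguerre (α + 1) (n + 1) x = laguerre α (n + 1) x + laguerre (α + 1) n x := by
  rw [laguerre_eq_sum_laguerreCoeff, laguerre_eq_sum_laguerreCoeff, laguerre_eq_sum_laguerreCoeff,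
    sum_range_succ _ (n + 1), sum_range_succ _ (n + 1), laguerreCoeff_self, laguerreCoeff_self,
    add_right_comm, ← sum_add_distrib]
  congr 1
  refine sum_congr rfl fun k hk => ?_
  rw [laguerreCoeff_add_one_succ (mem_range_succ_iff.mp hk), add_mul]

theorem add_mul_laguerreCoeff_zero (α : ℝ) (n : ℕ) :
    (n + 1 + α) * laguerreCoeff α n 0 = (n + 1) * laguerreCoeff α (n + 1) 0 := by
  simp only [laguerreCoeff, Nat.sub_zero, CharP.cast_eq_zero, add_zero, pow_zero,
    Nat.factorial_zero, Nat.cast_one, div_one, one_mul]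
  rw [succ_mul_multichoose_succ]
  ring

theorem laguerreCoeff_add_one {α : ℝ} {n k : ℕ} (hk : k < n) :
    laguerreCoeff (α + 1) n k =
      (n + 1 + α) * laguerreCoeff α n (k + 1) - (n + 1) * laguerreCoeff α (n + 1) (k + 1) := by
  obtain ⟨j, rfl⟩ := Nat.exists_eq_add_of_lt hk
  have hmul := succ_mul_multichoose_succ (α + k + 1 + 1) j
  rw [laguerreCoeff, laguerreCoeff, laguerreCoeff, show k + j + 1 - k = j + 1 by omega,
    show k + j + 1 - (k + 1) = j by omega, show k + j + 1 + 1 - (k + 1) = j + 1 by omega,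
    Nat.cast_succ k, show α + (k + 1) + 1 = α + k + 1 + 1 by ring,
    show α + 1 + k + 1 = α + k + 1 + 1 by ring, Nat.factorial_succ]
  push_cast at hmul ⊢
  field_simp
  linear_combination -(-1) ^ k * hmul

theorem laguerreCoeff_add_one_self (α : ℝ) (n : ℕ) :
    laguerreCoeff (α + 1) n n = -(n + 1) * laguerreCoeff α (n + 1) (n + 1) := by
  rw [laguerreCoeff_self, laguerreCoeff_self, Nat.factorial_succ]
  push_cast
  field_simp
  ring

theorem mul_laguerre_add_one (α : ℝ) (n : ℕ) (x : ℝ) :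
    x * laguerre (α + 1) n x =
      (n + 1 + α) * laguerre α n x - (n + 1) * laguerre α (n + 1) x := by
  have hsum : ∑ k ∈ range n, x * (laguerreCoeff (α + 1) n k * x ^ k) =
      ∑ k ∈ range n, ((n + 1 + α) * (laguerreCoeff α n (k + 1) * x ^ (k + 1)) -
        (n + 1) * (laguerreCoeff α (n + 1) (k + 1) * x ^ (k + 1))) :=
    sum_congr rfl fun k hk => by rw [laguerreCoeff_add_one (mem_range.mp hk)]; ring
  rw [laguerre_eq_sum_laguerreCoeff, laguerre_eq_sum_laguerreCoeff, laguerre_eq_sum_laguerreCoeff,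
    sum_range_succ' (fun k => laguerreCoeff α (n + 1) k * x ^ k) (n + 1),
    sum_range_succ (fun k => laguerreCoeff α (n + 1) (k + 1) * x ^ (k + 1)) n,
    sum_range_succ' (fun k => laguerreCoeff α n k * x ^ k) n, mul_sum, sum_range_succ _ n, hsum,
    sum_sub_distrib, ← mul_sum, ← mul_sum, laguerreCoeff_add_one_self]
  linear_combination -add_mul_laguerreCoeff_zero α n

theorem add_one_mul_laguerre_add_one_succ (α : ℝ) (m : ℕ) (x : ℝ) :
    (α + 1) * laguerre (α + 1) (m + 1) x =
      (α + m + 2) * laguerre α (m + 1) x + x * laguerre (α + 2) m x := by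
  have h := mul_laguerre_add_one (α + 1) m x
  rw [show α + 1 + 1 = α + 2 by ring] at h
  linear_combination (α + m + 2) * laguerre_add_one_succ α m x - h

theorem laguerre_zero (α x : ℝ) : laguerre α 0 x = 1 := by
  simp [laguerre]

theorem laguerre_add_one_no_common_zeros {α : ℝ} (hα : -1 < α) (n : ℕ) (x : ℝ) :
    ¬(laguerre α n x = 0 ∧ laguerre (α + 1) n x = 0) := by
  induction n with
  | zero => simp [laguerre_zero]
  | succ n ih =>
    rintro ⟨h, h'⟩
    have hprev' : laguerre (α + 1) n x = 0 := by
      linear_combination h' - h - laguerre_add_one_succ α n x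
    have hprev : laguerre α n x = 0 := by
      refine eq_zero_of_ne_zero_of_mul_left_eq_zero (x := (n : ℝ) + 1 + α)
        (by linarith [n.cast_nonneg (α := ℝ)]) ?_
      linear_combination x * hprev' + (n + 1) * h - mul_laguerre_add_one α n x
    exact ih ⟨hprev, hprev'⟩

theorem laguerre_no_common_zeros_general (α : ℝ) (hα : α > -1) (n : ℕ) (x : ℝ) :
    ¬(laguerre α n x = 0 ∧ laguerre (α + 2) (n - 1) x = 0) := by
  rintro ⟨h, h₂⟩
  cases n with
  | zero => simp [laguerre_zero] at h
  | succ m =>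
    rw [Nat.add_sub_cancel] at h₂
    have h₁ : laguerre (α + 1) (m + 1) x = 0 := by
      refine eq_zero_of_ne_zero_of_mul_left_eq_zero (x := α + 1) (by linarith) ?_
      linear_combination add_one_mul_laguerre_add_one_succ α m x + (α + m + 2) * h + x * h₂
    exact laguerre_add_one_no_common_zeros hα (m + 1) x ⟨h, h₁⟩

theorem laguerre_no_common_zeros (α : ℝ) (hα : α > -1) (n : ℕ) (hn : 1 ≤ n) (x : ℝ) :
    ¬(laguerre α n x = 0 ∧ laguerre (α + 2) (n - 1) x = 0) :=
  laguerre_no_common_zeros_general α hα n x
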